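/- Let 𝔉 = ⟨W,≼⟩ be a classical first-order structure, in the language with one binary relation symbol, that is elementarily equivalent to ⟨ℕ,≤⟩ (i.e. a model of the first-order theory Th(ℕ,≤)). Then ≼ is a linear order on W containing an infinite ascending chain of pairwise distinct elements, and consequently there exists a function f : ℕ×ℕ → T satisfying (T1) and (T2) if and only if ¬B is not valid on the frame ⟨W,≼⟩. -/

import Mathlib

namespace FOML

/-- First-order modal formulas over a signature assigning to each arity `n` a type
`Pred n` of `n`-ary predicate letters; individual variables are indexed by `ℕ`.
(0-ary predicate letters are proposition letters.) -/
inductive Fml (Pred : ℕ → Type) : Type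
  | atom : {n : ℕ} → Pred n → (Fin n → ℕ) → Fml Pred
  | bot  : Fml Pred
  | imp  : Fml Pred → Fml Pred → Fml Pred
  | box  : Fml Pred → Fml Pred
  | all  : ℕ → Fml Pred → Fml Pred

namespace Fml

variable {Pred : ℕ → Type}

def neg (φ : Fml Pred) : Fml Pred := imp φ bot
def top : Fml Pred := neg bot
def and (φ ψ : Fml Pred) : Fml Pred := neg (imp φ (neg ψ))
def or (φ ψ : Fml Pred) : Fml Pred := imp (neg φ) ψ
def iff (φ ψ : Fml Pred) : Fml Pred := and (imp φ ψ) (imp ψ φ)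
def dia (φ : Fml Pred) : Fml Pred := neg (box (neg φ))
def ex (x : ℕ) (φ : Fml Pred) : Fml Pred := neg (all x (neg φ))

def bigAnd : List (Fml Pred) → Fml Pred
  | [] => top
  | φ :: l => and φ (bigAnd l)

def bigOr : List (Fml Pred) → Fml Pred
  | [] => bot
  | φ :: l => or φ (bigOr l)

/-- Iterated box: `□⁰φ = φ`, `□ⁿ⁺¹φ = □□ⁿφ`. -/
def boxN : ℕ → Fml Pred → Fml Pred
  | 0, φ => φ
  | n + 1, φ => box (boxN n φ)

/-- Replace every occurrence of `□` by `□⁺`, where `□⁺ψ = ψ ∧ □ψ`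
(equivalently, every `◇` by its dual `◇⁺ψ = ◇ψ ∨ ψ`). -/
def plus : Fml Pred → Fml Pred
  | atom P a => atom P a
  | bot => bot
  | imp φ ψ => imp (plus φ) (plus ψ)
  | box φ => and (plus φ) (box (plus φ))
  | all x φ => all x (plus φ)

end Fml

/-- A Kripke model with expanding domains based on the frame `⟨W, R⟩`:
a domain function `D` into nonempty subsets of the domain `Dom`, expanding along `R`,
and an interpretation `I` of predicate letters at each world, with
`I(w,P) ⊆ D(w)ⁿ` for `n`-ary `P`. -/
structure KModel (W : Type*) (R : W → W → Prop) (Pred : ℕ → Type) where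
  Dom : Type
  D : W → Set Dom
  D_ne : ∀ w, (D w).Nonempty
  D_mono : ∀ ⦃w v : W⦄, R w v → D w ⊆ D v
  I : W → (n : ℕ) → Pred n → (Fin n → Dom) → Prop
  I_dom : ∀ (w : W) (n : ℕ) (P : Pred n) (as : Fin n → Dom), I w n P as → ∀ i, as i ∈ D w

variable {W : Type*} {R : W → W → Prop} {Pred : ℕ → Type}

/-- Truth of a formula at a world of a Kripke model under an assignment. -/
def truth (M : KModel W R Pred) : Fml Pred → W → (ℕ → M.Dom) → Prop
  | .atom (n := n) P args, w, g => M.I w n P (fun i => g (args i))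
  | .bot, _, _ => False
  | .imp φ ψ, w, g => truth M φ w g → truth M ψ w g
  | .box φ, w, g => ∀ v : W, R w v → truth M φ v g
  | .all x φ, w, g => ∀ d ∈ M.D w, truth M φ w (Function.update g x d)

/-- A formula is true at a world `w` if it is true under every assignment
taking values in the domain of `w`. -/
def trueAt (M : KModel W R Pred) (w : W) (φ : Fml Pred) : Prop :=
  ∀ g : ℕ → M.Dom, (∀ x, g x ∈ M.D w) → truth M φ w g

/-- `φ ∈ L(W,R)`: validity on the frame `⟨W,R⟩` (truth in every model with
expanding domains based on it, at every world). -/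
def ValidOn (R : W → W → Prop) (φ : Fml Pred) : Prop :=
  ∀ (M : KModel W R Pred) (w : W), trueAt M w φ

/-- The model has (globally) constant domains. -/
def ConstDom (M : KModel W R Pred) : Prop := ∀ w v : W, M.D w = M.D v

/-- `φ ∈ L_c(W,R)`: truth in every model with constant domains based on `⟨W,R⟩`. -/
def ValidOnC (R : W → W → Prop) (φ : Fml Pred) : Prop :=
  ∀ (M : KModel W R Pred), ConstDom M → ∀ w : W, trueAt M w φ

/-- A finite set `T = {t₀, …, t_s}` of tile types (represented as `Fin (s+1)`, with
`t₀ = 0`), each with four edge colours. -/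
structure TileSet where
  s : ℕ
  left : Fin (s + 1) → ℕ
  right : Fin (s + 1) → ℕ
  up : Fin (s + 1) → ℕ
  down : Fin (s + 1) → ℕ

namespace TileSet

/-- (T1): colours match horizontally. -/
def T1 (ts : TileSet) (f : ℕ → ℕ → Fin (ts.s + 1)) : Prop :=
  ∀ n m : ℕ, ts.right (f n m) = ts.left (f (n + 1) m)

/-- (T2): colours match vertically. -/
def T2 (ts : TileSet) (f : ℕ → ℕ → Fin (ts.s + 1)) : Prop :=
  ∀ n m : ℕ, ts.up (f n m) = ts.down (f n (m + 1))

/-- (T3): the tile type `t₀` occurs infinitely often in the leftmost column. -/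
def T3 (ts : TileSet) (f : ℕ → ℕ → Fin (ts.s + 1)) : Prop :=
  {m : ℕ | f 0 m = 0}.Infinite

end TileSet

/-- The predicate letters used in the encoding: a binary letter `◁`; monadic letters
`M`, `P₀, …, P_{s+2}` and `P`; proposition letters `p` and `q`. -/
inductive Letter (s : ℕ) : ℕ → Type
  | lt : Letter s 2
  | M : Letter s 1
  | P : Fin (s + 3) → Letter s 1
  | Pm : Letter s 1
  | p : Letter s 0
  | q : Letter s 0

namespace Enc

/-- Formulas in the language of the encoding. -/
abbrev F (ts : TileSet) := Fml (Letter ts.s)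

/-- The list of all tile types. -/
def tiles (ts : TileSet) : List (Fin (ts.s + 1)) := List.finRange (ts.s + 1)

/-- Tile indices regarded as indices of the letters `P₀, …, P_{s+2}`. -/
def tl (ts : TileSet) (t : Fin (ts.s + 1)) : Fin (ts.s + 3) := ⟨t.1, by omega⟩

def pp (ts : TileSet) : F ts := .atom Letter.p Fin.elim0
def qq (ts : TileSet) : F ts := .atom Letter.q Fin.elim0
def Mx (ts : TileSet) (v : ℕ) : F ts := .atom Letter.M (fun _ => v)
def Px (ts : TileSet) (j : Fin (ts.s + 3)) (v : ℕ) : F ts := .atom (Letter.P j) (fun _ => v)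
def PP (ts : TileSet) (v : ℕ) : F ts := .atom Letter.Pm (fun _ => v)
def ltA (ts : TileSet) (v w : ℕ) : F ts := .atom Letter.lt ![v, w]

/-- `⟐φ = ◇(π ∧ ◇(¬π ∧ φ))`, for a "marker" formula `π` (the paper uses `π = p`,
and `π = ∀x P(x)` for the operator `⊡`). -/
def pdia (ts : TileSet) (π φ : F ts) : F ts := .dia (.and π (.dia (.and (.neg π) φ)))

/-- Iterated `⟐`. -/
def pdiaN (ts : TileSet) (π : F ts) : ℕ → F ts → F ts
  | 0, φ => φ
  | n + 1, φ => pdia ts π (pdiaN ts π n φ)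

/-- `U(x) = ⋀_{t ∈ T} ¬P_t(x)`, with the tile letters given by `Pf`. -/
def Ug (ts : TileSet) (Pf : Fin (ts.s + 1) → ℕ → F ts) (v : ℕ) : F ts :=
  .bigAnd ((tiles ts).map (fun t => .neg (Pf t v)))

/- The conjuncts of the formula `A`, parametrised by the formulas standing for
`x ◁ y` (`rel`), `M(x)` (`Mf`), `P_t(x)` (`Pf`) and `p` (`pf`); the individual
variables `x`, `y` are `0`, `1`. -/

/-- `A₀ = ∃x □U(x)` -/
def A0g (ts : TileSet) (Pf : Fin (ts.s + 1) → ℕ → F ts) : F ts :=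
  .ex 0 (.box (Ug ts Pf 0))

/-- `A₁ = ∃x(¬U(x) ∧ M(x))` -/
def A1g (ts : TileSet) (Mf : ℕ → F ts) (Pf : Fin (ts.s + 1) → ℕ → F ts) : F ts :=
  .ex 0 (.and (.neg (Ug ts Pf 0)) (Mf 0))

/-- `A₂ = ∀x∃y (x ◁ y)` -/
def A2g (ts : TileSet) (rel : ℕ → ℕ → F ts) : F ts := .all 0 (.ex 1 (rel 0 1))

/-- `A₃ = ∀x∀y(x◁y → □(∃x M(x) → x◁y))` -/
def A3g (ts : TileSet) (rel : ℕ → ℕ → F ts) (Mf : ℕ → F ts) : F ts :=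
  .all 0 (.all 1 (.imp (rel 0 1) (.box (.imp (.ex 0 (Mf 0)) (rel 0 1)))))

/-- `A₄ = ∀x∀y(x◁y → □(M(x) ↔ ¬p ∧ ⟐M(y) ∧ ¬⟐²M(y)))` -/
def A4g (ts : TileSet) (rel : ℕ → ℕ → F ts) (Mf : ℕ → F ts) (pf : F ts) : F ts :=
  .all 0 (.all 1 (.imp (rel 0 1)
    (.box (.iff (Mf 0)
      (.and (.neg pf) (.and (pdia ts pf (Mf 1)) (.neg (pdiaN ts pf 2 (Mf 1)))))))))

/-- `A₅ = ∀x∀y □⋀_{t∈T}(M(x) ∧ P_t(y) → □(M(x) → P_t(y)))` -/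
def A5g (ts : TileSet) (Mf : ℕ → F ts) (Pf : Fin (ts.s + 1) → ℕ → F ts) : F ts :=
  .all 0 (.all 1 (.box (.bigAnd ((tiles ts).map fun t =>
    .imp (.and (Mf 0) (Pf t 1)) (.box (.imp (Mf 0) (Pf t 1)))))))

/-- `A₆ = ∀x □⋀_{t∈T}(P_t(x) → ⋀_{t'≠t} ¬P_{t'}(x))` -/
def A6g (ts : TileSet) (Pf : Fin (ts.s + 1) → ℕ → F ts) : F ts :=
  .all 0 (.box (.bigAnd ((tiles ts).map fun t =>
    .imp (Pf t 0)
      (.bigAnd (((tiles ts).filter (fun t' => decide (t' ≠ t))).map fun t' => .neg (Pf t' 0))))))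

/-- `A₇ = ∀x∀y □⋀_{t∈T}(x◁y ∧ P_t(x) → ⋁_{right(t)=left(t')} P_{t'}(y))` -/
def A7g (ts : TileSet) (rel : ℕ → ℕ → F ts) (Pf : Fin (ts.s + 1) → ℕ → F ts) : F ts :=
  .all 0 (.all 1 (.box (.bigAnd ((tiles ts).map fun t =>
    .imp (.and (rel 0 1) (Pf t 0))
      (.bigOr (((tiles ts).filter fun t' => decide (ts.right t = ts.left t')).map
        fun t' => Pf t' 1))))))

/-- `A₈ = ∀x∀y □⋀_{t∈T}(M(x) ∧ P_t(y) → □(∃y(x◁y ∧ M(y)) → ⋁_{up(t)=down(t')} P_{t'}(y)))` -/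
def A8g (ts : TileSet) (rel : ℕ → ℕ → F ts) (Mf : ℕ → F ts)
    (Pf : Fin (ts.s + 1) → ℕ → F ts) : F ts :=
  .all 0 (.all 1 (.box (.bigAnd ((tiles ts).map fun t =>
    .imp (.and (Mf 0) (Pf t 1))
      (.box (.imp (.ex 1 (.and (rel 0 1) (Mf 1)))
        (.bigOr (((tiles ts).filter fun t' => decide (ts.up t = ts.down t')).map
          fun t' => Pf t' 1))))))))

/-- `A₉ = ∀x(M(x) → □⟐P_{t₀}(x))` -/
def A9g (ts : TileSet) (Mf : ℕ → F ts) (Pf : Fin (ts.s + 1) → ℕ → F ts) (pf : F ts) : F ts :=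
  .all 0 (.imp (Mf 0) (.box (pdia ts pf (Pf 0 0))))

/-- The list `[A₀, …, A₈]` (all conjuncts of `A` except `A₉`), parametrised. -/
def AlistB (ts : TileSet) (rel : ℕ → ℕ → F ts) (Mf : ℕ → F ts)
    (Pf : Fin (ts.s + 1) → ℕ → F ts) (pf : F ts) : List (F ts) :=
  [A0g ts Pf, A1g ts Mf Pf, A2g ts rel, A3g ts rel Mf, A4g ts rel Mf pf,
   A5g ts Mf Pf, A6g ts Pf, A7g ts rel Pf, A8g ts rel Mf Pf]

/-- The tile letters `P_{t₀}, …, P_{t_s}`, i.e. `P₀, …, P_s`. -/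
def PfA (ts : TileSet) : Fin (ts.s + 1) → ℕ → F ts := fun t v => Px ts (tl ts t) v

/-- The formula `A`: the conjunction of `A₀` through `A₉`. -/
def A (ts : TileSet) : F ts :=
  .bigAnd (AlistB ts (ltA ts) (Mx ts) (PfA ts) (pp ts) ++
    [A9g ts (Mx ts) (PfA ts) (pp ts)])

/-- The formula `B`: the conjunction of `A₀` through `A₈`. -/
def B (ts : TileSet) : F ts := .bigAnd (AlistB ts (ltA ts) (Mx ts) (PfA ts) (pp ts))

/-- `A₉• = ∀x(M(x) → □(∃y M(y) → ⟐(∃y M(y) → P_{t₀}(x))))` -/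
def A9bul (ts : TileSet) : F ts :=
  .all 0 (.imp (Mx ts 0) (.box (.imp (.ex 1 (Mx ts 1))
    (pdia ts (pp ts) (.imp (.ex 1 (Mx ts 1)) (PfA ts 0 0))))))

/-- The formula `A•`: the conjunction of `A₀` through `A₈` together with `A₉•`. -/
def Abullet (ts : TileSet) : F ts :=
  .bigAnd (AlistB ts (ltA ts) (Mx ts) (PfA ts) (pp ts) ++ [A9bul ts])

/-- `⟐(P_{s+1}(x) ∧ P_{s+2}(y))`, the formula substituted for `x ◁ y` in `A′`. -/
def relA' (ts : TileSet) (v w : ℕ) : F ts :=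
  pdia ts (pp ts) (.and (Px ts ⟨ts.s + 1, by omega⟩ v) (Px ts ⟨ts.s + 2, by omega⟩ w))

/-- The formula `A′`: the result of substituting `⟐(P_{s+1}(x) ∧ P_{s+2}(y))` for
`x ◁ y` throughout `A`. -/
def A' (ts : TileSet) : F ts :=
  .bigAnd (AlistB ts (relA' ts) (Mx ts) (PfA ts) (pp ts) ++
    [A9g ts (Mx ts) (PfA ts) (pp ts)])

/-- `∀x P(x)`, the marker formula of the operator `⊡`. -/
def pfS (ts : TileSet) : F ts := .all 0 (PP ts 0)

/-- `⊡φ = ◇(∀x P(x) ∧ ◇(¬∀x P(x) ∧ φ))`. -/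
def bdia (ts : TileSet) (φ : F ts) : F ts := pdia ts (pfS ts) φ

/-- Iterated `⊡`. -/
def bdiaN (ts : TileSet) (n : ℕ) (φ : F ts) : F ts := pdiaN ts (pfS ts) n φ

/-- `q ∧ P(v)`, the replacement of `M(v)`. -/
def MS (ts : TileSet) (v : ℕ) : F ts := .and (qq ts) (PP ts v)

/-- `βₙ(x) = ∃y(⊡^{s+4}(q ∧ P(y)) ∧ ¬⊡^{s+5}(q ∧ P(y)) ∧
⊡(⊡^{n+1}(q ∧ P(y)) ∧ ¬⊡^{n+2}(q ∧ P(y)) ∧ P(x)))`, and `βₙ(y)` with `x`, `y` exchanged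
(the variables `x`, `y` are `0`, `1`, so the bound variable is `1 - v`). -/
def beta (ts : TileSet) (n : Fin (ts.s + 3)) (v : ℕ) : F ts :=
  .ex (1 - v) (.and (bdiaN ts (ts.s + 4) (MS ts (1 - v)))
    (.and (.neg (bdiaN ts (ts.s + 5) (MS ts (1 - v))))
      (bdia ts (.and (bdiaN ts ((n : ℕ) + 1) (MS ts (1 - v)))
        (.and (.neg (bdiaN ts ((n : ℕ) + 2) (MS ts (1 - v)))) (PP ts v))))))

/-- The replacement `βₜ` of the tile letters. -/
def PfS (ts : TileSet) : Fin (ts.s + 1) → ℕ → F ts := fun t v => beta ts (tl ts t) v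

/-- `⊡(β_{s+1}(x) ∧ β_{s+2}(y))`, the replacement of `x ◁ y` in `A*`. -/
def relS (ts : TileSet) (v w : ℕ) : F ts :=
  bdia ts (.and (beta ts ⟨ts.s + 1, by omega⟩ v) (beta ts ⟨ts.s + 2, by omega⟩ w))

/-- `A₄* = ∀x∀y(⊡(β_{s+1}(x) ∧ β_{s+2}(y)) →
□(q ∧ P(x) ↔ ¬∀x P(x) ∧ ⊡^{s+4}(q ∧ P(y)) ∧ ¬⊡^{s+5}(q ∧ P(y))))` -/
def A4star (ts : TileSet) : F ts :=
  .all 0 (.all 1 (.imp (relS ts 0 1)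
    (.box (.iff (MS ts 0)
      (.and (.neg (pfS ts))
        (.and (bdiaN ts (ts.s + 4) (MS ts 1)) (.neg (bdiaN ts (ts.s + 5) (MS ts 1)))))))))

/-- `A₉* = ∀x(q ∧ P(x) → □⊡β₀(x))` -/
def A9star (ts : TileSet) : F ts :=
  .all 0 (.imp (MS ts 0) (.box (bdia ts (beta ts ⟨0, by omega⟩ 0))))

/-- The list `[A₀*, …, A₈*]`. -/
def BstarList (ts : TileSet) : List (F ts) :=
  [A0g ts (PfS ts), A1g ts (MS ts) (PfS ts), A2g ts (relS ts), A3g ts (relS ts) (MS ts),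
   A4star ts, A5g ts (MS ts) (PfS ts), A6g ts (PfS ts), A7g ts (relS ts) (PfS ts),
   A8g ts (relS ts) (MS ts) (PfS ts)]

/-- The formula `A*`: the conjunction of `A₀*` through `A₉*`. -/
def Astar (ts : TileSet) : F ts := .bigAnd (BstarList ts ++ [A9star ts])

/-- The formula `B*`: the conjunction of `A₀*` through `A₈*`. -/
def Bstar (ts : TileSet) : F ts := .bigAnd (BstarList ts)

/-- The formula `A⁺`: the result of replacing every `□` in `A*` by `□⁺`. -/
def Aplus (ts : TileSet) : F ts := (Astar ts).plus

/-- The formula `B⁺`: the result of replacing every `□` in `B*` by `□⁺`. -/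
def Bplus (ts : TileSet) : F ts := (Bstar ts).plus

end Enc

end FOML

namespace FOML

section TruthLemmas

variable {W : Type*} {R : W → W → Prop} {Pred : ℕ → Type} {M : KModel W R Pred}

lemma truth_bot {w g} : truth M .bot w g ↔ False := Iff.rfl

lemma truth_imp {φ ψ : Fml Pred} {w g} :
    truth M (.imp φ ψ) w g ↔ (truth M φ w g → truth M ψ w g) := Iff.rfl

lemma truth_neg {φ : Fml Pred} {w g} : truth M φ.neg w g ↔ ¬ truth M φ w g := Iff.rfl

lemma truth_box {φ : Fml Pred} {w g} :
    truth M φ.box w g ↔ ∀ v, R w v → truth M φ v g := Iff.rfl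

lemma truth_all {φ : Fml Pred} {x w g} :
    truth M (.all x φ) w g ↔ ∀ d ∈ M.D w, truth M φ w (Function.update g x d) := Iff.rfl

lemma truth_and {φ ψ : Fml Pred} {w g} :
    truth M (φ.and ψ) w g ↔ truth M φ w g ∧ truth M ψ w g := by
  unfold Fml.and; rw [truth_neg, truth_imp, truth_neg]; tauto

lemma truth_or {φ ψ : Fml Pred} {w g} :
    truth M (φ.or ψ) w g ↔ truth M φ w g ∨ truth M ψ w g := by
  unfold Fml.or; rw [truth_imp, truth_neg]; tauto

lemma truth_iff {φ ψ : Fml Pred} {w g} :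
    truth M (φ.iff ψ) w g ↔ (truth M φ w g ↔ truth M ψ w g) := by
  unfold Fml.iff; rw [truth_and, truth_imp, truth_imp]; tauto

lemma truth_dia {φ : Fml Pred} {w g} :
    truth M φ.dia w g ↔ ∃ v, R w v ∧ truth M φ v g := by
  unfold Fml.dia; rw [truth_neg, truth_box]
  push_neg
  simp only [truth_neg, not_not]

lemma truth_ex {φ : Fml Pred} {x w g} :
    truth M (.ex x φ) w g ↔ ∃ d ∈ M.D w, truth M φ w (Function.update g x d) := by
  unfold Fml.ex; rw [truth_neg, truth_all]
  push_neg
  simp only [truth_neg, not_not]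

lemma truth_bigAnd {l : List (Fml Pred)} {w g} :
    truth M (.bigAnd l) w g ↔ ∀ φ ∈ l, truth M φ w g := by
  induction l with
  | nil => simp [Fml.bigAnd, Fml.top, truth_neg, truth_bot]
  | cons φ l ih => simp [Fml.bigAnd, truth_and, ih]

lemma truth_bigOr {l : List (Fml Pred)} {w g} :
    truth M (.bigOr l) w g ↔ ∃ φ ∈ l, truth M φ w g := by
  induction l with
  | nil => simp [Fml.bigOr, truth_bot]
  | cons φ l ih => simp [Fml.bigOr, truth_or, ih]

end TruthLemmas

section Seq

/-- generic construction of a recursive sequence of choices -/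
lemma exists_seq {α : Type*} (Q : ℕ → α → Prop) (Rl : α → α → Prop) (a0 : α) (h0 : Q 0 a0)
    (hs : ∀ m a, Q m a → ∃ b, Rl a b ∧ Q (m + 1) b) :
    ∃ v : ℕ → α, v 0 = a0 ∧ ∀ m, Rl (v m) (v (m + 1)) ∧ Q m (v m) := by
  choose next hR hQ using hs
  let v : ∀ m : ℕ, {a : α // Q m a} := fun m =>
    Nat.rec ⟨a0, h0⟩ (fun m ih => ⟨next m ih.1 ih.2, hQ m ih.1 ih.2⟩) m
  exact ⟨fun m => (v m).1, rfl, fun m => ⟨hR m (v m).1 (v m).2, (v m).2⟩⟩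

end Seq

section Chain

variable {W : Type} {r : W → W → Prop} {c : ℕ → W}

variable (hrefl : ∀ a, r a a) (htrans : ∀ a b c, r a b → r b c → r a c)
  (hanti : ∀ a b, r a b → r b a → a = b) (htot : ∀ a b, r a b ∨ r b a)
  (hmin : ∀ y, r (c 0) y)
  (hstep : ∀ m, (r (c m) (c (m + 1)) ∧ ¬ r (c (m + 1)) (c m)) ∧
      ∀ z, r (c m) z → ¬ r z (c m) → r (c (m + 1)) z)

include hrefl htrans hstep
set_option linter.unusedSectionVars false

lemma ch_mono : ∀ i j : ℕ, i ≤ j → r (c i) (c j) := by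
  intro i j h
  induction j, h using Nat.le_induction with
  | base => exact hrefl _
  | succ j hij ih => exact htrans _ _ _ ih (hstep j).1.1

lemma ch_notle : ∀ i j : ℕ, j < i → ¬ r (c i) (c j) := by
  intro i j h hr
  exact (hstep j).1.2 (htrans _ _ _ (ch_mono hrefl htrans hstep (j+1) i h) hr)

lemma ch_inj : ∀ i j : ℕ, c i = c j → i = j := by
  intro i j h
  by_contra hne
  rcases Nat.lt_or_ge i j with hij | hij
  · exact ch_notle hrefl htrans hstep j i hij (h ▸ hrefl (c i))
  · exact ch_notle hrefl htrans hstep i j (by omega) (h ▸ hrefl (c i))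

lemma ch_le_iff : ∀ i j : ℕ, r (c i) (c j) ↔ i ≤ j := by
  intro i j
  constructor
  · intro h; by_contra hn
    exact ch_notle hrefl htrans hstep i j (by omega) h
  · exact ch_mono hrefl htrans hstep i j

include hanti htot hmin in
lemma ch_std : ∀ k y, r y (c k) → ∃ j, j ≤ k ∧ y = c j := by
  intro k
  induction k with
  | zero => exact fun y hy => ⟨0, le_refl _, hanti _ _ hy (hmin y)⟩
  | succ k ih =>
    intro y hy
    by_cases hyk : r y (c k)
    · obtain ⟨j, hj, rfl⟩ := ih y hyk
      exact ⟨j, by omega, rfl⟩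
    · rcases htot (c k) y with h | h
      · exact ⟨k + 1, le_refl _, hanti _ _ hy ((hstep k).2 y h hyk)⟩
      · exact absurd h hyk

end Chain

section Part1

open FirstOrder FirstOrder.Language

/-- `∃x ∀y, x ≤ y` -/
private def minSent : Language.order.Sentence := ∃' ∀' ((&0).le &1)

/-- every element has an immediate strict successor -/
private def succSent : Language.order.Sentence :=
  ∀' ∃' (((&0).le &1 ⊓ ∼((&1).le &0)) ⊓ ∀' (((&0).le &2 ⊓ ∼((&2).le &0)) ⟹ (&1).le &2))

lemma part1_facts (W : Type) (r : W → W → Prop)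
    (he : @Language.ElementarilyEquivalent Language.order ℕ W
      (Language.orderStructure ℕ) (@Language.orderStructure W ⟨r⟩)) :
    (∀ a, r a a) ∧ (∀ a b c, r a b → r b c → r a c) ∧
      (∀ a b, r a b → r b a → a = b) ∧ (∀ a b, r a b ∨ r b a) ∧
      (∃ m : W, ∀ y, r m y) ∧
      (∀ x : W, ∃ y, (r x y ∧ ¬ r y x) ∧ ∀ z, r x z → ¬ r z x → r y z) := by
  letI : LE W := ⟨r⟩
  letI : Language.order.Structure ℕ := Language.orderStructure ℕ
  letI : Language.order.Structure W := Language.orderStructure W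
  haveI : Language.order.OrderedStructure W := ⟨fun _ => Iff.rfl⟩
  haveI : Language.order.OrderedStructure ℕ := ⟨fun _ => Iff.rfl⟩
  have hsent : ∀ φ : Language.order.Sentence, (ℕ ⊨ φ) → (W ⊨ φ) :=
    fun φ h => (he.realize_sentence φ).mp h
  refine ⟨?_, ?_, ?_, ?_, ?_, ?_⟩
  · have := hsent leSymb.reflexive (by
      simp [Relations.realize_reflexive]; exact ⟨le_refl⟩)
    simp [Relations.realize_reflexive] at this; exact this.refl
  · have := hsent leSymb.transitive (by
      simp [Relations.realize_transitive]; exact ⟨fun a b c => le_trans⟩)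
    simp [Relations.realize_transitive] at this; exact this.trans
  · have := hsent leSymb.antisymmetric (by
      simp [Relations.realize_antisymmetric]; exact ⟨fun a b => le_antisymm⟩)
    simp [Relations.realize_antisymmetric] at this; exact this.antisymm
  · have := hsent leSymb.total (by
      simp [Relations.realize_total]; exact ⟨le_total⟩)
    simp [Relations.realize_total] at this; exact this.total
  · have := hsent minSent (by
      simp [minSent, Sentence.Realize, Formula.Realize, Term.realize, Fin.snoc]
      exact ⟨0, fun y => Nat.zero_le y⟩)
    simp [minSent, Sentence.Realize, Formula.Realize, Term.realize, Fin.snoc] at this; exact this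
  · have := hsent succSent (by
      simp [succSent, Sentence.Realize, Formula.Realize, Term.realize, Fin.snoc]
      intro x; exact ⟨x + 1, ⟨by omega, by omega⟩, fun z => by omega⟩)
    have h' := this
    simp only [succSent, Sentence.Realize, Formula.Realize, BoundedFormula.realize_all,
      BoundedFormula.realize_ex, BoundedFormula.realize_inf, BoundedFormula.realize_not,
      BoundedFormula.realize_imp, Term.realize_le, Term.realize, Sum.elim_inr] at h'
    intro x
    obtain ⟨y, hy⟩ := h' x
    refine ⟨y, ?_⟩
    simp [Fin.snoc] at hy; exact hy

end Part1

end FOML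


namespace FOML
namespace Enc

section PdiaLemma

variable {W : Type*} {R : W → W → Prop} {ts : TileSet} {M : KModel W R (Letter ts.s)}

lemma truth_pdia {π φ : F ts} {w g} :
    truth M (pdia ts π φ) w g ↔
      ∃ v1, R w v1 ∧ truth M π v1 g ∧
        ∃ v2, R v1 v2 ∧ ¬ truth M π v2 g ∧ truth M φ v2 g := by
  rw [pdia, truth_dia]
  simp only [truth_and, truth_dia, truth_neg]

end PdiaLemma

section Fwd

variable {W : Type} (r : W → W → Prop) (ts : TileSet)

/-- interpretation for the model built from a tiling `f` along a chain `c` -/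
def fwdI (f : ℕ → ℕ → Fin (ts.s + 1)) (c : ℕ → W) :
    W → (n : ℕ) → Letter ts.s n → (Fin n → Option ℕ) → Prop := fun v _n L as =>
  match L with
  | .lt => (∃ k, as 0 = some k ∧ as 1 = some (k + 1)) ∨ (as 0 = none ∧ as 1 = none)
  | .M => ∃ k, as 0 = some k ∧ v = c (2 * k + 1)
  | .P j => ∃ k m, as 0 = some k ∧ v = c m ∧ ((f k (m / 2) : ℕ) = (j : ℕ))
  | .Pm => False
  | .p => ∃ m, v = c (2 * m)
  | .q => False

/-- the model built from a tiling `f` along a chain `c` -/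
@[reducible] def fwdM (f : ℕ → ℕ → Fin (ts.s + 1)) (c : ℕ → W) : KModel W r (Letter ts.s) where
  Dom := Option ℕ
  D := fun _ => Set.univ
  D_ne := fun _ => ⟨none, trivial⟩
  D_mono := fun _ _ _ => subset_rfl
  I := fwdI ts f c
  I_dom := fun _ _ _ _ _ _ => trivial

variable {r ts} {f : ℕ → ℕ → Fin (ts.s + 1)} {c : ℕ → W}

lemma fwd_Mx {g : ℕ → Option ℕ} {v x} :
    truth (fwdM r ts f c) (Mx ts x) v g ↔ ∃ k, g x = some k ∧ v = c (2 * k + 1) :=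
  Iff.rfl

lemma fwd_pp {g : ℕ → Option ℕ} {v} :
    truth (fwdM r ts f c) (pp ts) v g ↔ ∃ m, v = c (2 * m) :=
  Iff.rfl

lemma fwd_PfA {g : ℕ → Option ℕ} {v x t} :
    truth (fwdM r ts f c) (PfA ts t x) v g ↔
      ∃ k m, g x = some k ∧ v = c m ∧ f k (m / 2) = t := by
  show (∃ k m, g x = some k ∧ v = c m ∧ ((f k (m / 2) : ℕ) = ((tl ts t : Fin (ts.s + 3)) : ℕ)))
      ↔ _
  constructor
  · rintro ⟨k, m, h1, h2, h3⟩
    exact ⟨k, m, h1, h2, Fin.ext h3⟩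
  · rintro ⟨k, m, h1, h2, h3⟩
    exact ⟨k, m, h1, h2, congrArg Fin.val h3⟩

lemma fwd_ltA {g : ℕ → Option ℕ} {v x y} :
    truth (fwdM r ts f c) (ltA ts x y) v g ↔
      ((∃ k, g x = some k ∧ g y = some (k + 1)) ∨ (g x = none ∧ g y = none)) := by
  show fwdI ts f c v 2 Letter.lt (fun i => g (![x, y] i)) ↔ _
  have h0 : (![x, y] : Fin 2 → ℕ) 0 = x := rfl
  have h1 : (![x, y] : Fin 2 → ℕ) 1 = y := rfl
  show ((∃ k, g (![x, y] 0) = some k ∧ g (![x, y] 1) = some (k + 1)) ∨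
      (g (![x, y] 0) = none ∧ g (![x, y] 1) = none)) ↔ _
  rw [h0, h1]

lemma fwd_B (hrefl : ∀ a, r a a) (htrans : ∀ a b c, r a b → r b c → r a c)
    (hanti : ∀ a b, r a b → r b a → a = b) (htot : ∀ a b, r a b ∨ r b a)
    (hmin : ∀ y, r (c 0) y)
    (hstep : ∀ m, (r (c m) (c (m + 1)) ∧ ¬ r (c (m + 1)) (c m)) ∧
      ∀ z, r (c m) z → ¬ r z (c m) → r (c (m + 1)) z)
    (hf1 : ts.T1 f) (hf2 : ts.T2 f) :
    truth (fwdM r ts f c) (B ts) (c 1) (fun _ => none) := by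
  have hle : ∀ i j, r (c i) (c j) ↔ i ≤ j := ch_le_iff hrefl htrans hstep
  have hinj : ∀ i j, c i = c j → i = j := ch_inj hrefl htrans hstep
  have hstd : ∀ k y, r y (c k) → ∃ j, j ≤ k ∧ y = c j :=
    ch_std hrefl htrans hanti htot hmin hstep
  -- characterization of ⟐M(y)
  have L2 : ∀ (v : W) (g : ℕ → Option ℕ) (n y : ℕ), g y = some (n + 1) →
      (truth (fwdM r ts f c) (pdia ts (pp ts) (Mx ts y)) v g ↔ r v (c (2 * n + 2))) := by
    intro v g n y hy
    rw [truth_pdia]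
    constructor
    · rintro ⟨v1, hv1, hp1, v2, hv2, hp2, hM⟩
      rw [fwd_Mx] at hM
      obtain ⟨k, hk, rfl⟩ := hM
      rw [hy] at hk
      obtain rfl : n + 1 = k := Option.some.inj hk
      obtain ⟨m1, rfl⟩ := fwd_pp.1 hp1
      have h1 : 2 * m1 ≤ 2 * (n + 1) + 1 := (hle _ _).1 hv2
      exact htrans _ _ _ hv1 ((hle _ _).2 (by omega))
    · intro h
      refine ⟨c (2 * n + 2), h, ⟨n + 1, by ring_nf⟩,
        c (2 * (n + 1) + 1), (hle _ _).2 (by omega), ?_, ⟨n + 1, hy, rfl⟩⟩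
      rw [fwd_pp]
      rintro ⟨m, hm⟩
      have := hinj _ _ hm
      omega
  -- characterization of ⟐⟐M(y)
  have L3 : ∀ (v : W) (g : ℕ → Option ℕ) (n y : ℕ), g y = some (n + 1) →
      (truth (fwdM r ts f c) (pdiaN ts (pp ts) 2 (Mx ts y)) v g ↔ r v (c (2 * n))) := by
    intro v g n y hy
    have e : pdiaN ts (pp ts) 2 (Mx ts y) = pdia ts (pp ts) (pdia ts (pp ts) (Mx ts y)) := rfl
    rw [e, truth_pdia]
    constructor
    · rintro ⟨v1, hv1, hp1, v2, hv2, hp2, hin⟩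
      rw [L2 _ _ _ _ hy] at hin
      obtain ⟨j, hj, rfl⟩ := hstd _ _ hin
      obtain ⟨m1, rfl⟩ := fwd_pp.1 hp1
      rw [fwd_pp] at hp2
      have hodd : ∀ m, j ≠ 2 * m := by
        intro m hm
        exact hp2 ⟨m, by rw [hm]⟩
      have h1 : 2 * m1 ≤ j := (hle _ _).1 hv2
      have h2 := hodd (n + 1)
      have h3 := hodd m1
      exact htrans _ _ _ hv1 ((hle _ _).2 (by omega))
    · intro h
      refine ⟨c (2 * n), h, ⟨n, rfl⟩, c (2 * n + 1), (hle _ _).2 (by omega), ?_, ?_⟩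
      · rw [fwd_pp]
        rintro ⟨m, hm⟩
        have := hinj _ _ hm
        omega
      · rw [L2 _ _ _ _ hy]
        exact (hle _ _).2 (by omega)
  rw [B, truth_bigAnd]
  intro φ hφ
  simp only [AlistB, List.mem_cons, List.not_mem_nil, or_false] at hφ
  rcases hφ with rfl | rfl | rfl | rfl | rfl | rfl | rfl | rfl | rfl
  -- A0
  · rw [A0g, truth_ex]
    refine ⟨none, trivial, ?_⟩
    rw [truth_box]
    intro v _
    rw [Ug, truth_bigAnd]
    intro ψ hψ
    simp only [List.mem_map] at hψ
    obtain ⟨t, -, rfl⟩ := hψ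
    rw [truth_neg, fwd_PfA]
    rintro ⟨k, m, hk, -, -⟩
    rw [Function.update_self] at hk
    exact nomatch hk
  -- A1
  · rw [A1g, truth_ex]
    refine ⟨some 0, trivial, ?_⟩
    rw [truth_and]
    constructor
    · rw [truth_neg, Ug, truth_bigAnd]
      intro hall
      have hmem : (Fml.neg (PfA ts (f 0 0) 0) : F ts) ∈
          (tiles ts).map (fun t => Fml.neg (PfA ts t 0)) :=
        List.mem_map.2 ⟨f 0 0, List.mem_finRange _, rfl⟩
      have := hall _ hmem
      rw [truth_neg] at this
      apply this
      rw [fwd_PfA]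
      exact ⟨0, 1, by rw [Function.update_self], rfl, rfl⟩
    · rw [fwd_Mx]
      exact ⟨0, by rw [Function.update_self], rfl⟩
  -- A2
  · rw [A2g, truth_all]
    intro d _
    rw [truth_ex]
    match d with
    | none =>
      refine ⟨none, trivial, ?_⟩
      rw [fwd_ltA]
      right
      constructor
      · rw [Function.update_of_ne (by norm_num), Function.update_self]
      · rw [Function.update_self]
    | some k =>
      refine ⟨some (k + 1), trivial, ?_⟩
      rw [fwd_ltA]
      left
      refine ⟨k, ?_, ?_⟩
      · rw [Function.update_of_ne (by norm_num), Function.update_self]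
      · rw [Function.update_self]
  -- A3
  · rw [A3g, truth_all]
    intro d0 _
    rw [truth_all]
    intro d1 _
    rw [truth_imp]
    intro hrel
    rw [truth_box]
    intro v _
    rw [truth_imp]
    intro _
    rw [fwd_ltA] at hrel ⊢
    exact hrel
  -- A4
  · rw [A4g, truth_all]
    intro d0 _
    rw [truth_all]
    intro d1 _
    rw [truth_imp]
    intro hrel
    rw [truth_box]
    intro v hv
    rw [truth_iff]
    rw [fwd_ltA] at hrel
    have hg0 : (Function.update (Function.update (fun _ => (none : Option ℕ)) 0 d0) 1 d1) 0
        = d0 := by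
      rw [Function.update_of_ne (by norm_num), Function.update_self]
    have hg1 : (Function.update (Function.update (fun _ => (none : Option ℕ)) 0 d0) 1 d1) 1
        = d1 := Function.update_self _ _ _
    rw [hg0, hg1] at hrel
    rcases hrel with ⟨n, hd0, hd1⟩ | ⟨hd0, hd1⟩
    · have hy : (Function.update (Function.update (fun _ => (none : Option ℕ)) 0 d0) 1 d1) 1
          = some (n + 1) := by rw [hg1, hd1]
      rw [truth_and, truth_neg, truth_and, truth_neg, fwd_pp, fwd_Mx,
        L2 _ _ _ _ hy, L3 _ _ _ _ hy]
      constructor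
      · rintro ⟨k, hk, rfl⟩
        rw [hg0, hd0] at hk
        obtain rfl : n = k := Option.some.inj hk
        refine ⟨?_, (hle _ _).2 (by omega), ?_⟩
        · rintro ⟨m, hm⟩
          have := hinj _ _ hm
          omega
        · intro hcon
          have := (hle _ _).1 hcon
          omega
      · rintro ⟨hnp, h2, h3⟩
        obtain ⟨j, hj, rfl⟩ := hstd _ _ h2
        have hodd : ∀ m, j ≠ 2 * m := by
          intro m hm
          exact hnp ⟨m, by rw [hm]⟩
        have hj2 : ¬ j ≤ 2 * n := fun h => h3 ((hle _ _).2 h)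
        have h4 := hodd (n + 1)
        have h5 : j = 2 * n + 1 := by omega
        exact ⟨n, by rw [hg0, hd0], by rw [h5]⟩
    · constructor
      · rw [fwd_Mx]
        rintro ⟨k, hk, -⟩
        rw [hg0, hd0] at hk
        exact nomatch hk
      · rw [truth_and, truth_and]
        rintro ⟨-, h2, -⟩
        rw [truth_pdia] at h2
        obtain ⟨v1, -, -, v2, -, -, hM⟩ := h2
        rw [fwd_Mx] at hM
        obtain ⟨k, hk, -⟩ := hM
        rw [hg1, hd1] at hk
        exact nomatch hk
  -- A5
  · rw [A5g, truth_all]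
    intro d0 _
    rw [truth_all]
    intro d1 _
    rw [truth_box]
    intro v _
    rw [truth_bigAnd]
    intro ψ hψ
    simp only [List.mem_map] at hψ
    obtain ⟨t, -, rfl⟩ := hψ
    rw [truth_imp, truth_and]
    rintro ⟨hM, hP⟩
    rw [truth_box]
    intro v' hv'
    rw [truth_imp]
    intro hM'
    rw [fwd_Mx] at hM hM'
    obtain ⟨k, hk, rfl⟩ := hM
    obtain ⟨k', hk', rfl⟩ := hM'
    rw [hk] at hk'
    obtain rfl : k = k' := Option.some.inj hk'
    exact hP
  -- A6
  · rw [A6g, truth_all]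
    intro d _
    rw [truth_box]
    intro v _
    rw [truth_bigAnd]
    intro ψ hψ
    simp only [List.mem_map] at hψ
    obtain ⟨t, -, rfl⟩ := hψ
    rw [truth_imp]
    intro hP
    rw [truth_bigAnd]
    intro ψ' hψ'
    simp only [List.mem_map, List.mem_filter, decide_eq_true_eq] at hψ'
    obtain ⟨t', ⟨-, hne⟩, rfl⟩ := hψ'
    rw [truth_neg, fwd_PfA]
    rw [fwd_PfA] at hP
    obtain ⟨k, m, hk, rfl, hft⟩ := hP
    rintro ⟨k', m', hk', hcc, hft'⟩
    have hm : m' = m := hinj _ _ hcc.symm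
    rw [hk] at hk'
    obtain rfl : k = k' := Option.some.inj hk'
    rw [hm] at hft'
    exact hne (hft'.symm.trans hft)
  -- A7
  · rw [A7g, truth_all]
    intro d0 _
    rw [truth_all]
    intro d1 _
    rw [truth_box]
    intro v _
    rw [truth_bigAnd]
    intro ψ hψ
    simp only [List.mem_map] at hψ
    obtain ⟨t, -, rfl⟩ := hψ
    rw [truth_imp, truth_and]
    rintro ⟨hrel, hP⟩
    rw [fwd_ltA] at hrel
    rw [fwd_PfA] at hP
    obtain ⟨k, m, hk, rfl, hft⟩ := hP
    rcases hrel with ⟨k1, hk1, hk2⟩ | ⟨hk1, -⟩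
    · rw [hk] at hk1
      obtain rfl : k = k1 := Option.some.inj hk1
      rw [truth_bigOr]
      refine ⟨PfA ts (f (k + 1) (m / 2)) 1, ?_, ?_⟩
      · apply List.mem_map.2
        refine ⟨f (k + 1) (m / 2), ?_, rfl⟩
        apply List.mem_filter.2
        refine ⟨List.mem_finRange _, ?_⟩
        rw [decide_eq_true_eq, ← hft]
        exact hf1 k (m / 2)
      · rw [fwd_PfA]
        exact ⟨k + 1, m, hk2, rfl, rfl⟩
    · rw [hk] at hk1
      exact nomatch hk1
  -- A8
  · rw [A8g, truth_all]
    intro d0 _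
    rw [truth_all]
    intro d1 _
    rw [truth_box]
    intro v _
    rw [truth_bigAnd]
    intro ψ hψ
    simp only [List.mem_map] at hψ
    obtain ⟨t, -, rfl⟩ := hψ
    rw [truth_imp, truth_and]
    rintro ⟨hM, hP⟩
    rw [truth_box]
    intro v' hv'
    rw [truth_imp]
    intro hex
    rw [fwd_Mx] at hM
    obtain ⟨n, hn, rfl⟩ := hM
    rw [fwd_PfA] at hP
    obtain ⟨k, m, hk, hcm, hft⟩ := hP
    obtain rfl : m = 2 * n + 1 := hinj _ _ hcm.symm
    rw [truth_ex] at hex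
    obtain ⟨e, -, he⟩ := hex
    rw [truth_and, fwd_ltA, fwd_Mx] at he
    obtain ⟨hrel, hMe⟩ := he
    obtain ⟨k3, hk3, rfl⟩ := hMe
    rw [Function.update_self] at hk3
    have hg0e : ∀ (gg : ℕ → Option ℕ) (e : Option ℕ),
        Function.update gg 1 e 0 = gg 0 :=
      fun gg e => Function.update_of_ne (by norm_num) _ _
    rcases hrel with ⟨k2, hk2, hk2'⟩ | ⟨hnone, -⟩
    · rw [hg0e, hn] at hk2
      obtain rfl : n = k2 := Option.some.inj hk2
      rw [Function.update_self, hk3] at hk2'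
      have hk5 : k3 = n + 1 := Option.some.inj hk2'
      subst hk5
      rw [truth_bigOr]
      refine ⟨PfA ts (f k (n + 1)) 1, ?_, ?_⟩
      · apply List.mem_map.2
        refine ⟨f k (n + 1), ?_, rfl⟩
        apply List.mem_filter.2
        refine ⟨List.mem_finRange _, ?_⟩
        rw [decide_eq_true_eq, ← hft]
        have hdiv : (2 * n + 1) / 2 = n := by omega
        rw [hdiv]
        exact hf2 k n
      · rw [fwd_PfA]
        refine ⟨k, 2 * (n + 1) + 1, hk, rfl, ?_⟩
        have hdiv : (2 * (n + 1) + 1) / 2 = n + 1 := by omega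
        rw [hdiv]
    · rw [hg0e, hn] at hnone
      exact nomatch hnone

end Fwd

end Enc
end FOML


namespace FOML
namespace Enc

section Decode

variable {W : Type} {r : W → W → Prop} {ts : TileSet}

/-- interpretation of `M(x)` -/
def MI (M : KModel W r (Letter ts.s)) (d : M.Dom) (v : W) : Prop :=
  M.I v 1 Letter.M (fun _ => d)

/-- interpretation of `P_t(x)` -/
def PIt (M : KModel W r (Letter ts.s)) (t : Fin (ts.s + 1)) (d : M.Dom) (v : W) : Prop :=
  M.I v 1 (Letter.P (tl ts t)) (fun _ => d)

/-- interpretation of `x ◁ y` at a world -/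
def RIv (M : KModel W r (Letter ts.s)) (v : W) (d d' : M.Dom) : Prop :=
  M.I v 2 Letter.lt ![d, d']

variable {M : KModel W r (Letter ts.s)}

lemma truth_Mx {g : ℕ → M.Dom} {v x} : truth M (Mx ts x) v g ↔ MI M (g x) v := Iff.rfl

lemma truth_PfA {g : ℕ → M.Dom} {v x t} :
    truth M (PfA ts t x) v g ↔ PIt M t (g x) v := Iff.rfl

lemma truth_ltA {g : ℕ → M.Dom} {v x y} :
    truth M (ltA ts x y) v g ↔ RIv M v (g x) (g y) := by
  show M.I v 2 Letter.lt (fun i => g (![x, y] i)) ↔ M.I v 2 Letter.lt ![g x, g y]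
  have e : (fun i => g (![x, y] i)) = ![g x, g y] := by
    funext i
    fin_cases i <;> rfl
  rw [e]

lemma tiling_of_truth (hrefl : ∀ a, r a a) (htrans : ∀ a b c, r a b → r b c → r a c)
    (M : KModel W r (Letter ts.s)) (w₀ : W) (g₀ : ℕ → M.Dom)
    (hB : truth M (B ts) w₀ g₀) :
    ∃ f : ℕ → ℕ → Fin (ts.s + 1), ts.T1 f ∧ ts.T2 f := by
  have upd01 : ∀ (g : ℕ → M.Dom) (d d' : M.Dom),
      (Function.update (Function.update g 0 d) 1 d') 0 = d ∧
      (Function.update (Function.update g 0 d) 1 d') 1 = d' := fun g d d' =>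
    ⟨by rw [Function.update_of_ne (by norm_num), Function.update_self],
      Function.update_self _ _ _⟩
  rw [B, truth_bigAnd] at hB
  have h1 := hB (A1g ts (Mx ts) (PfA ts)) (by simp [AlistB])
  have h2 := hB (A2g ts (ltA ts)) (by simp [AlistB])
  have h3 := hB (A3g ts (ltA ts) (Mx ts)) (by simp [AlistB])
  have h4 := hB (A4g ts (ltA ts) (Mx ts) (pp ts)) (by simp [AlistB])
  have h6 := hB (A6g ts (PfA ts)) (by simp [AlistB])
  have h7 := hB (A7g ts (ltA ts) (PfA ts)) (by simp [AlistB])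
  have h8 := hB (A8g ts (ltA ts) (Mx ts) (PfA ts)) (by simp [AlistB])
  -- A1: starting element
  rw [A1g, truth_ex] at h1
  obtain ⟨a0, ha0D, h1'⟩ := h1
  rw [truth_and, truth_neg] at h1'
  obtain ⟨hU0, hM0⟩ := h1'
  rw [truth_Mx, Function.update_self] at hM0
  have ht0 : ∃ t, PIt M t a0 w₀ := by
    by_contra hcon
    push_neg at hcon
    apply hU0
    rw [Ug, truth_bigAnd]
    intro ψ hψ
    simp only [List.mem_map] at hψ
    obtain ⟨t, -, rfl⟩ := hψ
    rw [truth_neg, truth_PfA, Function.update_self]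
    exact hcon t
  -- A2: successor function for ◁
  rw [A2g, truth_all] at h2
  have hA2 : ∀ d ∈ M.D w₀, ∃ d' ∈ M.D w₀, RIv M w₀ d d' := by
    intro d hd
    have h := h2 d hd
    rw [truth_ex] at h
    obtain ⟨d', hd', h⟩ := h
    rw [truth_ltA, (upd01 _ _ _).1, (upd01 _ _ _).2] at h
    exact ⟨d', hd', h⟩
  -- the horizontal chain
  obtain ⟨a, ha0, haP⟩ := exists_seq (fun _ d => d ∈ M.D w₀) (RIv M w₀) a0 ha0D
    (fun m d hd => by
      obtain ⟨d', hd', hr⟩ := hA2 d hd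
      exact ⟨d', hr, hd'⟩)
  have haD : ∀ m, a m ∈ M.D w₀ := fun m => (haP m).2
  have haR : ∀ m, RIv M w₀ (a m) (a (m + 1)) := fun m => (haP m).1
  -- A3: ◁ persists at worlds with an M-element
  rw [A3g, truth_all] at h3
  have hA3 : ∀ m v, r w₀ v → (∃ e ∈ M.D v, MI M e v) → RIv M v (a m) (a (m + 1)) := by
    rintro m v hv ⟨e, heD, heM⟩
    have t1 := h3 (a m) (haD m)
    rw [truth_all] at t1
    have t1 := t1 (a (m + 1)) (haD (m + 1))
    rw [truth_imp] at t1
    have t1 := t1 (by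
      rw [truth_ltA, (upd01 _ _ _).1, (upd01 _ _ _).2]
      exact haR m)
    rw [truth_box] at t1
    have t1 := t1 v hv
    rw [truth_imp] at t1
    have t1 := t1 (by
      rw [truth_ex]
      refine ⟨e, heD, ?_⟩
      rw [truth_Mx, Function.update_self]
      exact heM)
    rw [truth_ltA, (upd01 _ _ _).1, (upd01 _ _ _).2] at t1
    exact t1
  -- A4: vertical successor
  rw [A4g, truth_all] at h4
  have hNext : ∀ m v, r w₀ v → MI M (a m) v → ∃ v2, r v v2 ∧ MI M (a (m + 1)) v2 := by
    intro m v hv hMv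
    have t1 := h4 (a m) (haD m)
    rw [truth_all] at t1
    have t1 := t1 (a (m + 1)) (haD (m + 1))
    rw [truth_imp] at t1
    have t1 := t1 (by
      rw [truth_ltA, (upd01 _ _ _).1, (upd01 _ _ _).2]
      exact haR m)
    rw [truth_box] at t1
    have t1 := t1 v hv
    rw [truth_iff] at t1
    have t2 := t1.1 (by
      rw [truth_Mx, (upd01 _ _ _).1]
      exact hMv)
    rw [truth_and] at t2
    obtain ⟨-, t2⟩ := t2
    rw [truth_and] at t2
    obtain ⟨t2, -⟩ := t2
    rw [truth_pdia] at t2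
    obtain ⟨v1, hv1, -, v2, hv2, -, hM2⟩ := t2
    rw [truth_Mx, (upd01 _ _ _).2] at hM2
    exact ⟨v2, htrans _ _ _ hv1 hv2, hM2⟩
  -- A6: uniqueness of tiles
  rw [A6g, truth_all] at h6
  have hUniq : ∀ d ∈ M.D w₀, ∀ v, r w₀ v → ∀ t t', PIt M t d v → PIt M t' d v → t = t' := by
    intro d hd v hv t t' hP hP'
    by_contra hne
    have t1 := h6 d hd
    rw [truth_box] at t1
    have t1 := t1 v hv
    rw [truth_bigAnd] at t1
    have t2 := t1 _ (List.mem_map.2 ⟨t, List.mem_finRange _, rfl⟩)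
    rw [truth_imp] at t2
    have t3 := t2 (by
      rw [truth_PfA, Function.update_self]
      exact hP)
    rw [truth_bigAnd] at t3
    have t4 := t3 _ (List.mem_map.2 ⟨t', List.mem_filter.2 ⟨List.mem_finRange _, by
      rw [decide_eq_true_eq]
      exact fun h => hne h.symm⟩, rfl⟩)
    rw [truth_neg, truth_PfA, Function.update_self] at t4
    exact t4 hP'
  -- A7: horizontal matching
  rw [A7g, truth_all] at h7
  have h7use : ∀ k v, r w₀ v → ∀ t, RIv M v (a k) (a (k + 1)) → PIt M t (a k) v →
      ∃ t', ts.right t = ts.left t' ∧ PIt M t' (a (k + 1)) v := by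
    intro k v hv t hrel hP
    have t1 := h7 (a k) (haD k)
    rw [truth_all] at t1
    have t1 := t1 (a (k + 1)) (haD (k + 1))
    rw [truth_box] at t1
    have t1 := t1 v hv
    rw [truth_bigAnd] at t1
    have t2 := t1 _ (List.mem_map.2 ⟨t, List.mem_finRange _, rfl⟩)
    rw [truth_imp, truth_and] at t2
    have t3 := t2 ⟨by
      rw [truth_ltA, (upd01 _ _ _).1, (upd01 _ _ _).2]
      exact hrel, by
      rw [truth_PfA, (upd01 _ _ _).1]
      exact hP⟩
    rw [truth_bigOr] at t3
    obtain ⟨ψ, hmem, hψ⟩ := t3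
    simp only [List.mem_map, List.mem_filter, decide_eq_true_eq] at hmem
    obtain ⟨t', ⟨-, hrl⟩, rfl⟩ := hmem
    rw [truth_PfA, (upd01 _ _ _).2] at hψ
    exact ⟨t', hrl, hψ⟩
  -- A8: vertical matching
  rw [A8g, truth_all] at h8
  have h8use : ∀ m k v, r w₀ v → ∀ t, MI M (a m) v → PIt M t (a k) v →
      ∀ v', r v v' → (∃ e ∈ M.D v', RIv M v' (a m) e ∧ MI M e v') →
      ∃ t', ts.up t = ts.down t' ∧ PIt M t' (a k) v' := by
    rintro m k v hv t hMv hPv v' hvv' ⟨e, heD, heR, heM⟩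
    have t1 := h8 (a m) (haD m)
    rw [truth_all] at t1
    have t1 := t1 (a k) (haD k)
    rw [truth_box] at t1
    have t1 := t1 v hv
    rw [truth_bigAnd] at t1
    have t2 := t1 _ (List.mem_map.2 ⟨t, List.mem_finRange _, rfl⟩)
    rw [truth_imp, truth_and] at t2
    have t3 := t2 ⟨by
      rw [truth_Mx, (upd01 _ _ _).1]
      exact hMv, by
      rw [truth_PfA, (upd01 _ _ _).2]
      exact hPv⟩
    rw [truth_box] at t3
    have t3 := t3 v' hvv'
    rw [truth_imp] at t3
    have t4 := t3 (by
      rw [truth_ex]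
      refine ⟨e, heD, ?_⟩
      rw [truth_and, truth_ltA, truth_Mx, Function.update_self,
        Function.update_of_ne (show (0 : ℕ) ≠ 1 by norm_num), (upd01 _ _ _).1]
      exact ⟨heR, heM⟩)
    rw [truth_bigOr] at t4
    obtain ⟨ψ, hmem, hψ⟩ := t4
    simp only [List.mem_map, List.mem_filter, decide_eq_true_eq] at hmem
    obtain ⟨t', ⟨-, hud⟩, rfl⟩ := hmem
    rw [truth_PfA, (upd01 _ _ _).2] at hψ
    exact ⟨t', hud, hψ⟩
  -- vertical sequence of worlds
  obtain ⟨vs, hvs0, hvsP⟩ := exists_seq (fun m v => r w₀ v ∧ MI M (a m) v) r w₀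
    ⟨hrefl w₀, by rw [ha0]; exact hM0⟩
    (fun m v hQ => by
      obtain ⟨v2, hv2, hM2⟩ := hNext m v hQ.1 hQ.2
      exact ⟨v2, hv2, htrans _ _ _ hQ.1 hv2, hM2⟩)
  have hvw : ∀ m, r w₀ (vs m) := fun m => (hvsP m).2.1
  have hvM : ∀ m, MI M (a m) (vs m) := fun m => (hvsP m).2.2
  have hvstep : ∀ m, r (vs m) (vs (m + 1)) := fun m => (hvsP m).1
  have hrelv : ∀ m k, RIv M (vs m) (a k) (a (k + 1)) := fun m k =>
    hA3 k (vs m) (hvw m) ⟨a m, M.D_mono (hvw m) (haD m), hvM m⟩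
  -- existence of tiles in column 0
  have hcol : ∀ m, ∃ t, PIt M t (a 0) (vs m) := by
    intro m
    induction m with
    | zero =>
      rw [hvs0, ha0]
      exact ht0
    | succ m ih =>
      obtain ⟨t, ht⟩ := ih
      obtain ⟨t', -, ht'⟩ := h8use m 0 (vs m) (hvw m) t (hvM m) ht (vs (m + 1)) (hvstep m)
        ⟨a (m + 1), M.D_mono (hvw (m + 1)) (haD (m + 1)), hrelv (m + 1) m, hvM (m + 1)⟩
      exact ⟨t', ht'⟩
  -- existence of tiles everywhere
  have hall : ∀ n m, ∃ t, PIt M t (a n) (vs m) := by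
    intro n
    induction n with
    | zero => exact fun m => hcol m
    | succ n ih =>
      intro m
      obtain ⟨t, ht⟩ := ih m
      obtain ⟨t', -, ht'⟩ := h7use n (vs m) (hvw m) t (hrelv m n) ht
      exact ⟨t', ht'⟩
  choose F hF using hall
  refine ⟨F, ?_, ?_⟩
  · intro n m
    obtain ⟨t', hrl, ht'⟩ := h7use n (vs m) (hvw m) (F n m) (hrelv m n) (hF n m)
    have he := hUniq (a (n + 1)) (haD (n + 1)) (vs m) (hvw m) t' (F (n + 1) m) ht' (hF (n + 1) m)
    rw [← he]
    exact hrl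
  · intro n m
    obtain ⟨t', hud, ht'⟩ := h8use m n (vs m) (hvw m) (F n m) (hvM m) (hF n m)
      (vs (m + 1)) (hvstep m)
      ⟨a (m + 1), M.D_mono (hvw (m + 1)) (haD (m + 1)), hrelv (m + 1) m, hvM (m + 1)⟩
    have he := hUniq (a n) (haD n) (vs (m + 1)) (hvw (m + 1)) t' (F n (m + 1)) ht' (hF n (m + 1))
    rw [← he]
    exact hud

end Decode

end Enc
end FOML

namespace FOML
open Enc FirstOrder

/-- let `𝔉 = ⟨W,≼⟩` be a classical structure for the language with one
binary relation symbol that is elementarily equivalent to `⟨ℕ,≤⟩`. Then `≼` is a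
linear order on `W` containing an infinite ascending chain of pairwise distinct
elements, and there is a function `f : ℕ×ℕ → T` satisfying (T1) and (T2) iff `¬B`
is not valid on the frame `⟨W,≼⟩`. -/
theorem statement15 (W : Type) (r : W → W → Prop)
    (he : @Language.ElementarilyEquivalent Language.order ℕ W
      (Language.orderStructure ℕ) (@Language.orderStructure W ⟨r⟩))
    (ts : TileSet) :
    ((∀ a, r a a) ∧ (∀ a b c, r a b → r b c → r a c) ∧
      (∀ a b, r a b → r b a → a = b) ∧ (∀ a b, r a b ∨ r b a) ∧
      ∃ c : ℕ → W, (∀ n, r (c n) (c (n + 1))) ∧ Function.Injective c) ∧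
    ((∃ f : ℕ → ℕ → Fin (ts.s + 1), ts.T1 f ∧ ts.T2 f) ↔
      ¬ ValidOn r (Fml.neg (B ts))) := by
  obtain ⟨hrefl, htrans, hanti, htot, hmin, hsucc⟩ := part1_facts W r he
  obtain ⟨c, hc0, hcstep⟩ := exists_seq (fun _ _ => True)
    (fun x y => (r x y ∧ ¬ r y x) ∧ ∀ z, r x z → ¬ r z x → r y z)
    (Classical.choose hmin) trivial
    (fun m x _ => by
      obtain ⟨y, hy⟩ := hsucc x
      exact ⟨y, hy, trivial⟩)
  have hstep : ∀ m, (r (c m) (c (m + 1)) ∧ ¬ r (c (m + 1)) (c m)) ∧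
      ∀ z, r (c m) z → ¬ r z (c m) → r (c (m + 1)) z := fun m => (hcstep m).1
  have hcmin : ∀ y, r (c 0) y := by
    rw [hc0]
    exact Classical.choose_spec hmin
  refine ⟨⟨hrefl, htrans, hanti, htot, c, fun n => (hstep n).1.1,
    fun i j hij => ch_inj hrefl htrans hstep i j hij⟩, ?_, ?_⟩
  · rintro ⟨f, hf1, hf2⟩ hval
    have h := hval (fwdM r ts f c) (c 1) (fun _ => none) (fun _ => trivial)
    exact (truth_neg.1 h) (fwd_B hrefl htrans hanti htot hcmin hstep hf1 hf2)
  · intro hnv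
    rw [ValidOn] at hnv
    push_neg at hnv
    obtain ⟨M, w, hw⟩ := hnv
    rw [trueAt] at hw
    push_neg at hw
    obtain ⟨g, hg, hng⟩ := hw
    rw [truth_neg, not_not] at hng
    exact tiling_of_truth hrefl htrans M w g hng

end FOML
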